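/- arXiv:2311.13590 — 2 statements merged into one kernel-verified Lean document; each statement's English description precedes it below -/
import Mathlib

section
/- Let G be a simple undirected graph and M a subset of edges such that every vertex is incident to at most 2 edges of M (a 2-matching) and M contains no triangle (triangle-free). If P is an M-alternating path of even length starting at a vertex unsaturated in M such that M ⊕ P is a 2-matching and for every triangle t of G with all edges contained in M ∪ P, two edges of t are consecutive on P, then M ⊕ P is triangle-free. -/
open SimpleGraph
open scoped symmDiff

def deg {V : Type*} [DecidableEq V] (M : Finset (Sym2 V)) (v : V) : ℕ :=
  (M.filter (fun e => v ∈ e)).card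

def Is2Matching {V : Type*} [DecidableEq V] (M : Finset (Sym2 V)) : Prop :=
  ∀ v, deg M v ≤ 2

def TriFree {V : Type*} (M : Finset (Sym2 V)) : Prop :=
  ∀ a b c : V, a ≠ b → b ≠ c → a ≠ c →
    ¬ (s(a,b) ∈ M ∧ s(b,c) ∈ M ∧ s(a,c) ∈ M)

def AltList {V : Type*} (M : Finset (Sym2 V)) (P : List (Sym2 V)) : Prop :=
  P.Chain' (fun e f => e ∈ M ↔ f ∉ M)

def Consecutive {V : Type*} (P : List (Sym2 V)) (e f : Sym2 V) : Prop :=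
  ∃ i, (P[i]? = some e ∧ P[i+1]? = some f) ∨
       (P[i]? = some f ∧ P[i+1]? = some e)

def AmenableOn {V : Type*} [DecidableEq V] (G : SimpleGraph V)
    (M : Finset (Sym2 V)) (P : List (Sym2 V)) : Prop :=
  ∀ a b c : V, a ≠ b → b ≠ c → a ≠ c →
    G.Adj a b → G.Adj b c → G.Adj a c →
    s(a,b) ∈ M ∪ P.toFinset → s(b,c) ∈ M ∪ P.toFinset → s(a,c) ∈ M ∪ P.toFinset →
    ∃ e f : Sym2 V, e ∈ ({s(a,b), s(b,c), s(a,c)} : Set (Sym2 V)) ∧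
      f ∈ ({s(a,b), s(b,c), s(a,c)} : Set (Sym2 V)) ∧ e ≠ f ∧ Consecutive P e f

lemma consec_contra {V : Type*} [DecidableEq V] {M : Finset (Sym2 V)}
    {P : List (Sym2 V)} (hAlt : AltList M P) {e f : Sym2 V}
    (hc : Consecutive P e f) (he : e ∈ M ∆ P.toFinset) (hf : f ∈ M ∆ P.toFinset) :
    False := by
  obtain ⟨i, hi⟩ := hc
  have key : ∀ x y : Sym2 V, P[i]? = some x → P[i+1]? = some y →
      x ∈ M ∆ P.toFinset → y ∈ M ∆ P.toFinset → False := by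
    intro x y hx hy hx' hy'
    have hxP : x ∈ P := List.mem_of_getElem? hx
    have hyP : y ∈ P := List.mem_of_getElem? hy
    have hxM : x ∉ M := by
      rcases Finset.mem_symmDiff.1 hx' with ⟨_, h⟩ | ⟨_, h⟩
      · exact absurd (List.mem_toFinset.2 hxP) h
      · exact h
    have hyM : y ∉ M := by
      rcases Finset.mem_symmDiff.1 hy' with ⟨_, h⟩ | ⟨_, h⟩
      · exact absurd (List.mem_toFinset.2 hyP) h
      · exact h
    have hlen : i + 1 < P.length := (List.getElem?_eq_some_iff.1 hy).1
    have hlen' : i < P.length - 1 := by omega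
    have := List.isChain_iff_getElem.1 hAlt i hlen
    obtain ⟨hxl, hx2⟩ := List.getElem?_eq_some_iff.1 hx
    obtain ⟨hyl, hy2⟩ := List.getElem?_eq_some_iff.1 hy
    rw [hx2, hy2] at this
    exact hxM (this.mpr hyM)
  rcases hi with ⟨h1, h2⟩ | ⟨h1, h2⟩
  · exact key e f h1 h2 he hf
  · exact key f e h1 h2 hf he

theorem stmt0 {V : Type*} [DecidableEq V] (G : SimpleGraph V)
    (M : Finset (Sym2 V)) (hME : ∀ e ∈ M, e ∈ G.edgeSet)
    (hM2 : Is2Matching M) (hMtf : TriFree M)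
    {s v : V} (p : G.Walk s v) (hTrail : p.IsTrail)
    (hAlt : AltList M p.edges)
    (hEven : Even p.length)
    (hs : deg M s < 2)
    (h2 : Is2Matching (M ∆ p.edges.toFinset))
    (hAm : AmenableOn G M p.edges) :
    TriFree (M ∆ p.edges.toFinset) := by
  intro a b c hab hbc hac ⟨h1, h2', h3⟩
  have hsub : ∀ e : Sym2 V, e ∈ M ∆ p.edges.toFinset → e ∈ M ∪ p.edges.toFinset := by
    intro e he
    rcases Finset.mem_symmDiff.1 he with ⟨h, _⟩ | ⟨h, _⟩
    · exact Finset.mem_union_left _ h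
    · exact Finset.mem_union_right _ h
  have hedge : ∀ e : Sym2 V, e ∈ M ∪ p.edges.toFinset → e ∈ G.edgeSet := by
    intro e he
    rcases Finset.mem_union.1 he with h | h
    · exact hME e h
    · exact p.edges_subset_edgeSet (List.mem_toFinset.1 h)
  have hadj1 : G.Adj a b := (SimpleGraph.mem_edgeSet G).1 (hedge _ (hsub _ h1))
  have hadj2 : G.Adj b c := (SimpleGraph.mem_edgeSet G).1 (hedge _ (hsub _ h2'))
  have hadj3 : G.Adj a c := (SimpleGraph.mem_edgeSet G).1 (hedge _ (hsub _ h3))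
  obtain ⟨e, f, he, hf, hef, hc⟩ :=
    hAm a b c hab hbc hac hadj1 hadj2 hadj3 (hsub _ h1) (hsub _ h2') (hsub _ h3)
  have heM : e ∈ M ∆ p.edges.toFinset := by
    rcases he with h | h | h <;> subst h <;> assumption
  have hfM : f ∈ M ∆ p.edges.toFinset := by
    rcases hf with h | h | h <;> subst h <;> assumption
  exact consec_contra hAlt hc heM hfM
end

section
/- Let M, N be 2-matchings and suppose a component K of M ⊕ N is a path with edges alternating between M∖N and N∖M. If K has more edges of N than of M, then both endpoints of K are incident to an N∖M edge of K, and both endpoints are unsaturated in M (deg_M < 2), provided deg_N(v) ≤ 2 for all v. -/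
open SimpleGraph
open scoped symmDiff

lemma alt_aux {α : Type*} (q r : α → Bool) :
    ∀ L : List α,
      L.Chain' (fun e f => (r e = true ∧ q f = true) ∨ (q e = true ∧ r f = true)) →
      (∀ x ∈ L, ¬(q x = true ∧ r x = true)) →
      ∀ e, L.head? = some e → r e = true → L.countP q ≤ L.countP r
  | [] => by intro _ _ e he; simp at he
  | [a] => by
      intro hch hd e he hre
      simp only [List.head?_cons, Option.some.injEq] at he; subst he
      have hq : q a = false := by
        cases hq : q a
        · rfl
        · exact absurd ⟨hq, hre⟩ (hd a (by simp))
      simp [List.countP_cons, hq, hre]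
  | a :: b :: L => by
      intro hch hd e he hre
      simp only [List.head?_cons, Option.some.injEq] at he; subst he
      obtain ⟨hab, hch'⟩ := List.isChain_cons_cons.mp hch
      have hqa : q a = false := by
        cases hq : q a
        · rfl
        · exact absurd ⟨hq, hre⟩ (hd a (by simp))
      rcases hab with ⟨_, hqb⟩ | ⟨hqe, _⟩
      · have hrb : r b = false := by
          cases hr : r b
          · rfl
          · exact absurd ⟨hqb, hr⟩ (hd b (by simp))
        have key : L.countP q ≤ L.countP r := by
          cases L with
          | nil => simp
          | cons c L' =>
            obtain ⟨hbc, hch''⟩ := List.isChain_cons_cons.mp hch'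
            have hrc : r c = true := by
              rcases hbc with ⟨h1, _⟩ | ⟨_, h2⟩
              · rw [hrb] at h1; cases h1
              · exact h2
            exact alt_aux q r (c :: L') hch''
              (fun x hx => hd x (List.mem_cons_of_mem _ (List.mem_cons_of_mem _ hx))) c rfl hrc
        simp only [List.countP_cons, hqa, hqb, hre, hrb]
        omega
      · rw [hqa] at hqe; cases hqe

lemma endpoint_aux {V : Type*} [DecidableEq V] {G : SimpleGraph V}
    (M N : Finset (Sym2 V)) (hN2 : Is2Matching N)
    {u v : V} (w : G.Walk u v) (hPath : w.IsPath)
    (hcomp : ∀ e ∈ M ∆ N, (∃ x, x ∈ e ∧ x ∈ w.support) → e ∈ w.edges)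
    (e₀ : Sym2 V) (h0 : w.edges.head? = some e₀) (h0N : e₀ ∈ N \ M) :
    u ∈ e₀ ∧ deg M u < 2 := by
  obtain ⟨h0N', h0M⟩ := Finset.mem_sdiff.mp h0N
  cases w with
  | nil => simp at h0
  | @cons _ x _ h p =>
    have he₀ : e₀ = s(u, x) := by
      simp only [Walk.edges_cons, List.head?_cons, Option.some.injEq] at h0
      exact h0.symm
    have hu0 : u ∈ e₀ := by rw [he₀]; simp
    obtain ⟨hp, hus⟩ := (Walk.cons_isPath_iff h p).mp hPath
    have hsubset : M.filter (fun e => u ∈ e) ⊆ N.filter (fun e => u ∈ e) := by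
      intro e he
      simp only [Finset.mem_filter] at he ⊢
      obtain ⟨heM, heu⟩ := he
      refine ⟨?_, heu⟩
      by_contra heN
      have hsd : e ∈ M ∆ N := Finset.mem_symmDiff.mpr (Or.inl ⟨heM, heN⟩)
      have hew := hcomp e hsd ⟨u, heu, Walk.start_mem_support _⟩
      rw [Walk.edges_cons] at hew
      rcases List.mem_cons.mp hew with he1 | he2
      · rw [← he₀] at he1; exact h0M (he1 ▸ heM)
      · obtain ⟨a, b⟩ := e
        rcases Sym2.mem_iff.mp heu with rfl | rfl
        · exact hus (p.fst_mem_support_of_mem_edges he2)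
        · exact hus (p.snd_mem_support_of_mem_edges he2)
    have hssub : M.filter (fun e => u ∈ e) ⊂ N.filter (fun e => u ∈ e) := by
      refine (Finset.ssubset_iff_of_subset hsubset).mpr ⟨e₀, ?_, ?_⟩
      · exact Finset.mem_filter.mpr ⟨h0N', hu0⟩
      · simp only [Finset.mem_filter]; tauto
    exact ⟨hu0, lt_of_lt_of_le (Finset.card_lt_card hssub) (hN2 u)⟩

theorem stmt17 {V : Type*} [DecidableEq V] (G : SimpleGraph V)
    (M N : Finset (Sym2 V))
    (hME : ∀ e ∈ M, e ∈ G.edgeSet) (hNE : ∀ e ∈ N, e ∈ G.edgeSet)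
    (hM2 : Is2Matching M) (hN2 : Is2Matching N)
    {u v : V} (huv : u ≠ v) (w : G.Walk u v) (hPath : w.IsPath)
    (hne : w.edges ≠ [])
    (hAltMN : w.edges.Chain' (fun e f =>
      (e ∈ M \ N ∧ f ∈ N \ M) ∨ (e ∈ N \ M ∧ f ∈ M \ N)))
    (hedges : ∀ e ∈ w.edges, e ∈ M ∆ N)
    (hcomp : ∀ e ∈ M ∆ N, (∃ x, x ∈ e ∧ x ∈ w.support) → e ∈ w.edges)
    (hcount : w.edges.countP (fun e => e ∈ M \ N) <
      w.edges.countP (fun e => e ∈ N \ M)) :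
    (∃ e ∈ w.edges, e ∈ N \ M ∧ u ∈ e) ∧
    (∃ e ∈ w.edges, e ∈ N \ M ∧ v ∈ e) ∧
    deg M u < 2 ∧ deg M v < 2 := by
  set q : Sym2 V → Bool := fun e => decide (e ∈ N \ M) with hq
  set r : Sym2 V → Bool := fun e => decide (e ∈ M \ N) with hr
  have hch : w.edges.Chain'
      (fun e f => (r e = true ∧ q f = true) ∨ (q e = true ∧ r f = true)) := by
    refine hAltMN.imp ?_
    intro e f h
    simp only [hq, hr, decide_eq_true_eq]
    exact h
  have hd : ∀ x ∈ w.edges, ¬(q x = true ∧ r x = true) := by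
    intro x _ hx
    simp only [hq, hr, decide_eq_true_eq, Finset.mem_sdiff] at hx
    tauto
  -- first edge
  set e₀ : Sym2 V := w.edges.head hne with he₀def
  have h0 : w.edges.head? = some e₀ := List.head?_eq_head hne
  have h0mem : e₀ ∈ w.edges := List.head_mem hne
  have h0N : e₀ ∈ N \ M := by
    rcases Finset.mem_symmDiff.mp (hedges e₀ h0mem) with ⟨h1, h2⟩ | ⟨h1, h2⟩
    · exfalso
      have := alt_aux q r w.edges hch hd e₀ h0
        (by simp [hr, Finset.mem_sdiff]; exact ⟨h1, h2⟩)
      omega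
    · exact Finset.mem_sdiff.mpr ⟨h1, h2⟩
  -- last edge
  have hner : w.edges.reverse ≠ [] := by simpa using hne
  set eₗ : Sym2 V := w.edges.reverse.head hner with heₗdef
  have hl : w.edges.reverse.head? = some eₗ := List.head?_eq_head hner
  have hlmem : eₗ ∈ w.edges := List.mem_reverse.mp (List.head_mem hner)
  have hchrev : w.edges.reverse.Chain'
      (fun e f => (r e = true ∧ q f = true) ∨ (q e = true ∧ r f = true)) := by
    refine List.isChain_reverse.mpr ?_
    refine hch.imp ?_
    intro e f h
    tauto
  have hdr : ∀ x ∈ w.edges.reverse, ¬(q x = true ∧ r x = true) := by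
    intro x hx; exact hd x (List.mem_reverse.mp hx)
  have hlN : eₗ ∈ N \ M := by
    rcases Finset.mem_symmDiff.mp (hedges eₗ hlmem) with ⟨h1, h2⟩ | ⟨h1, h2⟩
    · exfalso
      have := alt_aux q r w.edges.reverse hchrev hdr eₗ hl
        (by simp [hr, Finset.mem_sdiff]; exact ⟨h1, h2⟩)
      rw [List.countP_reverse, List.countP_reverse] at this
      omega
    · exact Finset.mem_sdiff.mpr ⟨h1, h2⟩
  -- endpoints
  obtain ⟨hu0, hdu⟩ := endpoint_aux M N hN2 w hPath hcomp e₀ h0 h0N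
  have hcomp' : ∀ e ∈ M ∆ N, (∃ x, x ∈ e ∧ x ∈ w.reverse.support) → e ∈ w.reverse.edges := by
    intro e he hx
    obtain ⟨x, hx1, hx2⟩ := hx
    rw [Walk.support_reverse, List.mem_reverse] at hx2
    rw [Walk.edges_reverse, List.mem_reverse]
    exact hcomp e he ⟨x, hx1, hx2⟩
  have hlrev : w.reverse.edges.head? = some eₗ := by
    rw [Walk.edges_reverse]; exact hl
  obtain ⟨hvl, hdv⟩ := endpoint_aux M N hN2 w.reverse hPath.reverse hcomp' eₗ hlrev hlN
  exact ⟨⟨e₀, h0mem, h0N, hu0⟩, ⟨eₗ, hlmem, hlN, hvl⟩, hdu, hdv⟩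
end
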